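/- Let M be a topological space, Z : M → Hom(Γ, ℂ) a continuous map, x ∈ M, ε > 0, and V ⊆ ℂ a strict cone such that Z_x(Γ) ∩ ∂V = {0} and |Z_x(a)| ≠ ε‖a‖ for all nonzero a ∈ Γ. Then for any finite set D ⊆ Γ, there exists an open neighborhood U of x such that D ∩ S(V, Z_x, ε) = D ∩ S(V, Z_y, ε) for all y ∈ U, where S(V,Z,ε) denotes the semigroup generated by {a ∈ Γ : Z(a) ∈ V, |Z(a)| ≥ ε‖a‖}. -/

import Mathlib

/-!
A strict cone `V` carries a linear functional `f` with `f ≥ c ‖·‖` on `V` for some `c > 0`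
(Hahn–Banach at each point of the compact set `closure V ∩ sphere 0 1`, then a finite subcover).
As `f ∘ Z_y` is additive and at least `c ε ‖b‖` on every generator `b` of `S(V, Z_y, ε)`, a
decomposition of `a` into generators only involves `b` with `c ε ‖b‖ ≤ f (Z_y a)`; for `y` near `x`
these lie in one finite set of lattice points, independent of `y`. For each such `b ≠ 0` the two
hypotheses on `Z_x` put `Z_x b` off the boundary of `{z | z ∈ V ∧ ε ‖b‖ ≤ ‖z‖}`, so whether `b` is
a generator does not change for `y` near `x`.
-/

/-- The canonical embedding `Γ = ℤⁿ → Γ_ℝ = ℝⁿ`. -/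
def iotaR (n : ℕ) (a : Fin n → ℤ) : Fin n → ℝ := fun i => (a i : ℝ)

/-- Evaluation of a homomorphism `Z ∈ Hom(Γ, ℂ) ≅ ℂⁿ` on `a ∈ Γ = ℤⁿ`. -/
noncomputable def applyZ (n : ℕ) (Z : Fin n → ℂ) (a : Fin n → ℤ) : ℂ :=
  ∑ i, (a i : ℂ) * Z i

/-- The semigroup `S(V, Z, ε)` generated by `{a ∈ Γ : Z(a) ∈ V, |Z(a)| ≥ ε ‖a‖}`. -/
noncomputable def SVZe (n : ℕ) (Z : Fin n → ℂ) (ε : ℝ) (V : Set ℂ) : Set (Fin n → ℤ) :=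
  (AddSubsemigroup.closure
    {a : Fin n → ℤ | applyZ n Z a ∈ V ∧ ε * ‖iotaR n a‖ ≤ ‖applyZ n Z a‖} :
      AddSubsemigroup (Fin n → ℤ))

open Filter Topology

section Cone

variable {E : Type*} [NormedAddCommGroup E] [NormedSpace ℝ E] [ProperSpace E]

theorem ProperCone.exists_mul_norm_le_of_salient (C : ProperCone ℝ E)
    (hC : (C : ConvexCone ℝ E).Salient) :
    ∃ (f : StrongDual ℝ E) (c : ℝ), 0 < c ∧ ∀ x ∈ C, c * ‖x‖ ≤ f x := by
  set S := (C : Set E) ∩ Metric.sphere 0 1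
  have hS : IsCompact S := (isCompact_sphere 0 1).inter_left C.isClosed
  have hsep : ∀ z ∈ S, ∃ g : StrongDual ℝ E, (∀ x ∈ C, 0 ≤ g x) ∧ 0 < g z := by
    rintro z ⟨hzC, hz1⟩
    have hz0 : z ≠ 0 := by rintro rfl; simp at hz1
    obtain ⟨g, hg, hgz⟩ := C.hyperplane_separation_point (hC z hzC hz0)
    exact ⟨g, hg, by simpa using hgz⟩
  choose! g hg hgz using hsep
  obtain ⟨t, htS, hcover⟩ := hS.elim_nhds_subcover (fun z => {w | 0 < g z w})
    fun z hz => (isOpen_lt continuous_const (g z).continuous).mem_nhds (hgz z hz)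
  set F := ∑ z ∈ t, g z
  have hFS : ∀ w ∈ S, 0 < F w := by
    intro w hw
    obtain ⟨z, hzt, hzw⟩ := Set.mem_iUnion₂.1 (hcover hw)
    rw [sum_apply]
    exact Finset.sum_pos' (fun z hz => hg z (htS z hz) w hw.1) ⟨z, hzt, hzw⟩
  obtain ⟨c, hc, hcF⟩ := hS.exists_forall_le' F.continuous.continuousOn hFS
  refine ⟨F, c, hc, fun x hx => ?_⟩
  rcases eq_or_ne x 0 with rfl | hx0
  · simp
  have hxn : 0 < ‖x‖ := norm_pos_iff.2 hx0
  have hxS : ‖x‖⁻¹ • x ∈ S :=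
    ⟨C.smul_mem hx (inv_nonneg.2 hxn.le), by simp [norm_smul, hxn.ne']⟩
  have hcx := hcF _ hxS
  rw [map_smul, smul_eq_mul, le_inv_mul_iff₀ hxn] at hcx
  linarith

theorem exists_strongDual_mul_norm_le_of_strict_cone {V : Set E}
    (hVscale : ∀ r : ℝ, 0 < r → ∀ z ∈ V, r • z ∈ V)
    (hVadd : ∀ z ∈ V, ∀ w ∈ V, z + w ∈ V)
    (hVstrict : ¬ ∃ (p v : E), v ≠ 0 ∧ ∀ t : ℝ, p + t • v ∈ closure V) :
    ∃ (f : StrongDual ℝ E) (c : ℝ), 0 < c ∧ ∀ z ∈ V, c * ‖z‖ ≤ f z := by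
  rcases V.eq_empty_or_nonempty with rfl | hV
  · exact ⟨0, 1, one_pos, by simp⟩
  let K : ConvexCone ℝ E :=
    ⟨V, fun r hr z hz => hVscale r hr z hz, fun z hz w hw => hVadd z hz w hw⟩
  have hK : (K.closure : Set E).Nonempty ∧ IsClosed (K.closure : Set E) :=
    ⟨hV.mono subset_closure, isClosed_closure⟩
  lift K.closure to ProperCone ℝ E using hK with C hC
  have hCV : (C : Set E) = closure V := congrArg SetLike.coe hC
  have hsal : (C : ConvexCone ℝ E).Salient := by
    intro z hz hz0 hnz
    refine hVstrict ⟨0, z, hz0, fun t => ?_⟩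
    rw [zero_add, ← hCV]
    rcases le_or_gt 0 t with ht | ht
    · exact C.smul_mem hz ht
    · simpa using C.smul_mem hnz (neg_nonneg.2 ht.le)
  obtain ⟨f, c, hc, hfC⟩ := C.exists_mul_norm_le_of_salient hsal
  exact ⟨f, c, hc, fun z hz => hfC z (hCV.ge (subset_closure hz))⟩

end Cone

theorem AddSubsemigroup.mem_closure_inter_setOf_le {G R : Type*} [Add G] [AddCommMonoid R]
    [PartialOrder R] [IsOrderedAddMonoid R] (φ : G →ₙ+ R) {T : Set G} (hT : ∀ b ∈ T, 0 ≤ φ b)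
    {a : G} (ha : a ∈ closure T) : a ∈ closure (T ∩ {b | φ b ≤ φ a}) := by
  suffices 0 ≤ φ a ∧ a ∈ closure (T ∩ {b | φ b ≤ φ a}) from this.2
  induction ha using closure_induction with
  | mem b hb => exact ⟨hT b hb, subset_closure ⟨hb, le_rfl⟩⟩
  | add a₁ a₂ _ _ ih₁ ih₂ =>
    have h₁ : φ a₁ ≤ φ (a₁ + a₂) := by rw [map_add]; exact le_add_of_nonneg_right ih₂.1
    have h₂ : φ a₂ ≤ φ (a₁ + a₂) := by rw [map_add]; exact le_add_of_nonneg_left ih₁.1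
    refine ⟨by rw [map_add]; exact add_nonneg ih₁.1 ih₂.1, add_mem ?_ ?_⟩
    · exact closure_mono (Set.inter_subset_inter_right _ fun b hb => le_trans hb h₁) ih₁.2
    · exact closure_mono (Set.inter_subset_inter_right _ fun b hb => le_trans hb h₂) ih₂.2

theorem eventually_mem_iff_of_notMem_frontier {X : Type*} [TopologicalSpace X] {s : Set X} {x : X}
    (hx : x ∉ frontier s) : ∀ᶠ y in 𝓝 x, (y ∈ s ↔ x ∈ s) := by
  rw [← Set.mem_compl_iff, compl_frontier_eq_union_interior] at hx
  rcases hx with hx | hx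
  · filter_upwards [mem_interior_iff_mem_nhds.1 hx] with y hy
    exact iff_of_true hy (interior_subset hx)
  · filter_upwards [mem_interior_iff_mem_nhds.1 hx] with y hy
    exact iff_of_false hy (interior_subset hx)

theorem eventually_mem_and_le_norm_iff {X F : Type*} [TopologicalSpace X] [NormedAddCommGroup F]
    {ζ : X → F} {x : X} (hζ : ContinuousAt ζ x) {V : Set F} {r : ℝ} (hr : 0 ≤ r)
    (hfr : ζ x ∈ frontier V → ζ x = 0) (hne : ‖ζ x‖ ≠ r) :
    ∀ᶠ y in 𝓝 x, (ζ y ∈ V ∧ r ≤ ‖ζ y‖ ↔ ζ x ∈ V ∧ r ≤ ‖ζ x‖) := by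
  rcases hne.lt_or_gt with hlt | hgt
  · filter_upwards [hζ.norm.eventually (gt_mem_nhds hlt)] with y hy
    exact iff_of_false (fun h => h.2.not_gt hy) (fun h => h.2.not_gt hlt)
  · have hζx : ζ x ∉ frontier V := fun h => by
      rw [hfr h, norm_zero] at hgt; linarith
    filter_upwards [hζ.eventually (eventually_mem_iff_of_notMem_frontier hζx),
      hζ.norm.eventually (lt_mem_nhds hgt)] with y hV hy
    rw [hV]
    exact and_congr_right fun _ => iff_of_true hy.le hgt.le

def generatorsSVZe (n : ℕ) (Z : Fin n → ℂ) (ε : ℝ) (V : Set ℂ) : Set (Fin n → ℤ) :=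
  {a | applyZ n Z a ∈ V ∧ ε * ‖iotaR n a‖ ≤ ‖applyZ n Z a‖}

section SVZe

variable {n : ℕ} {ε : ℝ} {V : Set ℂ}

theorem SVZe_eq_closure_generatorsSVZe (Z : Fin n → ℂ) :
    SVZe n Z ε V = AddSubsemigroup.closure (generatorsSVZe n Z ε V) := rfl

theorem applyZ_zero (Z : Fin n → ℂ) : applyZ n Z 0 = 0 := by simp [applyZ]

theorem applyZ_add (Z : Fin n → ℂ) (a b : Fin n → ℤ) :
    applyZ n Z (a + b) = applyZ n Z a + applyZ n Z b := by
  simp [applyZ, ← Finset.sum_add_distrib, add_mul]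

theorem continuous_applyZ (a : Fin n → ℤ) : Continuous fun Z : Fin n → ℂ => applyZ n Z a := by
  unfold applyZ
  fun_prop

theorem norm_iotaR (a : Fin n → ℤ) : ‖iotaR n a‖ = ‖a‖ := by
  simp only [Pi.norm_def, iotaR]
  rfl

theorem finite_setOf_mul_norm_iotaR_le {c : ℝ} (hc : 0 < c) (t : ℝ) :
    {b : Fin n → ℤ | c * ‖iotaR n b‖ ≤ t}.Finite := by
  refine (isCompact_closedBall (0 : Fin n → ℤ) (t / c)).finite_of_discrete.subset fun b hb => ?_
  rw [Metric.mem_closedBall, dist_zero_right, le_div_iff₀ hc, ← norm_iotaR, mul_comm]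
  exact hb

variable {f : ℂ →L[ℝ] ℝ} {c : ℝ}

theorem mul_norm_iotaR_le_of_mem_generatorsSVZe (hc : 0 ≤ c) (hfV : ∀ z ∈ V, c * ‖z‖ ≤ f z)
    {Z : Fin n → ℂ} {b : Fin n → ℤ} (hb : b ∈ generatorsSVZe n Z ε V) :
    c * ε * ‖iotaR n b‖ ≤ f (applyZ n Z b) :=
  calc c * ε * ‖iotaR n b‖ = c * (ε * ‖iotaR n b‖) := mul_assoc _ _ _
    _ ≤ c * ‖applyZ n Z b‖ := mul_le_mul_of_nonneg_left hb.2 hc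
    _ ≤ f (applyZ n Z b) := hfV _ hb.1

theorem mem_SVZe_iff_mem_closure_inter (hc : 0 ≤ c) (hε : 0 ≤ ε)
    (hfV : ∀ z ∈ V, c * ‖z‖ ≤ f z) {Z : Fin n → ℂ} {a : Fin n → ℤ} {t : ℝ}
    (ht : f (applyZ n Z a) ≤ t) :
    a ∈ SVZe n Z ε V ↔
      a ∈ AddSubsemigroup.closure (generatorsSVZe n Z ε V ∩ {b | c * ε * ‖iotaR n b‖ ≤ t}) := by
  rw [SVZe_eq_closure_generatorsSVZe]
  refine ⟨fun ha => ?_, fun ha => AddSubsemigroup.closure_mono Set.inter_subset_left ha⟩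
  let φ : (Fin n → ℤ) →ₙ+ ℝ :=
    ⟨fun b => f (applyZ n Z b), fun a b => by simp only [applyZ_add, map_add]⟩
  have hgen : ∀ b ∈ generatorsSVZe n Z ε V, c * ε * ‖iotaR n b‖ ≤ f (applyZ n Z b) :=
    fun b hb => mul_norm_iotaR_le_of_mem_generatorsSVZe hc hfV hb
  refine AddSubsemigroup.closure_mono ?_ (AddSubsemigroup.mem_closure_inter_setOf_le φ
    (fun b hb => le_trans (by positivity) (hgen b hb)) ha)
  exact fun b hb => ⟨hb.1, (hgen b hb.1).trans (hb.2.trans ht)⟩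

variable {M : Type*} [TopologicalSpace M] {Z : M → Fin n → ℂ} {x : M}

theorem eventually_mem_generatorsSVZe_iff (hZ : ContinuousAt Z x) (hε : 0 ≤ ε)
    {b : Fin n → ℤ} (hbd : applyZ n (Z x) b ∈ frontier V → applyZ n (Z x) b = 0)
    (hne : b ≠ 0 → ‖applyZ n (Z x) b‖ ≠ ε * ‖iotaR n b‖) :
    ∀ᶠ y in 𝓝 x, (b ∈ generatorsSVZe n (Z y) ε V ↔ b ∈ generatorsSVZe n (Z x) ε V) := by
  rcases eq_or_ne b 0 with rfl | hb
  · exact Eventually.of_forall fun y => by simp [generatorsSVZe, applyZ_zero]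
  exact eventually_mem_and_le_norm_iff ((continuous_applyZ b).continuousAt.comp hZ)
    (by positivity) hbd (hne hb)

theorem eventually_mem_SVZe_iff (hZ : ContinuousAt Z x) (hc : 0 < c) (hε : 0 < ε)
    (hfV : ∀ z ∈ V, c * ‖z‖ ≤ f z)
    (hbd : ∀ a : Fin n → ℤ, applyZ n (Z x) a ∈ frontier V → applyZ n (Z x) a = 0)
    (hne : ∀ a : Fin n → ℤ, a ≠ 0 → ‖applyZ n (Z x) a‖ ≠ ε * ‖iotaR n a‖) (a : Fin n → ℤ) :
    ∀ᶠ y in 𝓝 x, (a ∈ SVZe n (Z y) ε V ↔ a ∈ SVZe n (Z x) ε V) := by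
  set t := f (applyZ n (Z x) a) + 1
  set B := {b : Fin n → ℤ | c * ε * ‖iotaR n b‖ ≤ t}
  have hgen : ∀ᶠ y in 𝓝 x, ∀ b ∈ B,
      (b ∈ generatorsSVZe n (Z y) ε V ↔ b ∈ generatorsSVZe n (Z x) ε V) :=
    (finite_setOf_mul_norm_iotaR_le (mul_pos hc hε) t).eventually_all.2
      fun b _ => eventually_mem_generatorsSVZe_iff hZ hε.le (hbd b) (hne b)
  have hf : ∀ᶠ y in 𝓝 x, f (applyZ n (Z y) a) < t :=
    (f.continuous.continuousAt.comp ((continuous_applyZ a).continuousAt.comp hZ)).eventually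
      (gt_mem_nhds (lt_add_one _))
  filter_upwards [hgen, hf] with y hgen hf
  have hB : generatorsSVZe n (Z y) ε V ∩ B = generatorsSVZe n (Z x) ε V ∩ B := by
    ext b
    exact and_congr_left (hgen b)
  rw [mem_SVZe_iff_mem_closure_inter hc.le hε.le hfV hf.le, hB,
    ← mem_SVZe_iff_mem_closure_inter hc.le hε.le hfV (lt_add_one _).le]

end SVZe

/-- Local constancy of the finite part of the semigroup `S(V, Z_x, ε)`
under deformation of a continuous family of central charges `Z : M → Hom(Γ, ℂ)`. -/
theorem stmt10 (n : ℕ) {M : Type*} [TopologicalSpace M]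
    (Z : M → Fin n → ℂ) (hZ : Continuous Z) (x : M)
    (ε : ℝ) (hε : 0 < ε) (V : Set ℂ)
    (hVscale : ∀ r : ℝ, 0 < r → ∀ z ∈ V, r • z ∈ V)
    (hVadd : ∀ z ∈ V, ∀ w ∈ V, z + w ∈ V)
    (hVstrict : ¬ ∃ (p v : ℂ), v ≠ 0 ∧ ∀ t : ℝ, p + t • v ∈ closure V)
    (hbd : ∀ a : Fin n → ℤ, applyZ n (Z x) a ∈ frontier V → applyZ n (Z x) a = 0)
    (hne : ∀ a : Fin n → ℤ, a ≠ 0 → ‖applyZ n (Z x) a‖ ≠ ε * ‖iotaR n a‖) :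
    ∀ D : Set (Fin n → ℤ), D.Finite →
      ∃ U : Set M, IsOpen U ∧ x ∈ U ∧ ∀ y ∈ U,
        D ∩ SVZe n (Z x) ε V = D ∩ SVZe n (Z y) ε V := by
  intro D hD
  obtain ⟨f, c, hc, hfV⟩ := exists_strongDual_mul_norm_le_of_strict_cone hVscale hVadd hVstrict
  have hloc : ∀ᶠ y in 𝓝 x, ∀ a ∈ D, (a ∈ SVZe n (Z y) ε V ↔ a ∈ SVZe n (Z x) ε V) :=
    hD.eventually_all.2 fun a _ =>
      eventually_mem_SVZe_iff hZ.continuousAt hc hε hfV hbd hne a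
  obtain ⟨U, hUloc, hU, hxU⟩ := eventually_nhds_iff.1 hloc
  refine ⟨U, hU, hxU, fun y hy => ?_⟩
  ext a
  exact and_congr_right fun ha => (hUloc y hy a ha).symm
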